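/- Suppose every execution in which an event of transaction T commits contains a state in which all events of T are precommitted, and no event may be scheduled while a conflicting event of another transaction is precommitted but not yet committed. Then for any two conflicting transactions T1, T2 that both commit in execution E, their all-precommitted states are distinct and ordered in E, and the earlier one determines the transaction order: if T1's all-precommitted state precedes T2's, then no event of T2 happens before any event of T1. -/

import Mathlib

theorem precommit_le_of_conflict {E : Type*} {p c : E → ℕ} {conf : E → E → Prop}
    (hrule : ∀ e1 e2, conf e1 e2 → p e1 < p e2 → c e1 < p e2) {e1 e2 : E}
    (hc : conf e2 e1) (hle : p e1 ≤ c e2) : p e1 ≤ p e2 :=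
  not_lt.mp fun hlt => (hrule e2 e1 hc hlt).not_ge hle

theorem stmt_18_general {E : Type*} (T1 T2 : Finset E) (p c : E → ℕ)
    (hinj : Function.Injective p)
    (conf : E → E → Prop) (hsymm : Symmetric conf)
    (hrule : ∀ e1 e2, conf e1 e2 → p e1 < p e2 → c e1 < p e2)
    (hdisj : Disjoint T1 T2)
    (s1 s2 : ℕ)
    (h1a : ∀ e ∈ T1, p e ≤ s1)
    (h2b : ∀ e ∈ T2, s2 < c e)
    (hlt : s1 < s2) :
    ∀ e1 ∈ T1, ∀ e2 ∈ T2, conf e1 e2 → p e1 < p e2 := by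
  intro e1 h1 e2 h2 hc
  have hne : e1 ≠ e2 := fun h => Finset.disjoint_left.mp hdisj h1 (h ▸ h2)
  -- in state s1 the event e1 is precommitted while e2 has not yet committed
  have hle : p e1 ≤ c e2 := ((h1a e1 h1).trans_lt (hlt.trans (h2b e2 h2))).le
  exact (precommit_le_of_conflict hrule (hsymm hc) hle).lt_of_ne (hinj.ne hne)

/-- Staged commit serializability core: if no event may be scheduled while a
conflicting event is precommitted but uncommitted, then for conflicting
transactions whose all-precommitted states are ordered s1 < s2, every
conflicting pair is precommitted in the same order, so T2 never happens before
T1. -/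
theorem stmt_18 {E : Type*} (T1 T2 : Finset E) (p c : E → ℕ)
    (hpc : ∀ e, p e < c e) (hinj : Function.Injective p)
    (conf : E → E → Prop) (hsymm : Symmetric conf)
    (hrule : ∀ e1 e2, conf e1 e2 → p e1 < p e2 → c e1 < p e2)
    (hdisj : Disjoint T1 T2)
    (s1 s2 : ℕ)
    (h1a : ∀ e ∈ T1, p e ≤ s1) (h1b : ∀ e ∈ T1, s1 < c e)
    (h2a : ∀ e ∈ T2, p e ≤ s2) (h2b : ∀ e ∈ T2, s2 < c e)
    (hconf : ∃ e1 ∈ T1, ∃ e2 ∈ T2, conf e1 e2)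
    (hlt : s1 < s2) :
    ∀ e1 ∈ T1, ∀ e2 ∈ T2, conf e1 e2 → p e1 < p e2 :=
  stmt_18_general T1 T2 p c hinj conf hsymm hrule hdisj s1 s2 h1a h2b hlt
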